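/- arXiv:2401.00533 — 2 statements merged into one kernel-verified Lean document; each statement's English description precedes it below -/
import Mathlib

section
/- Let B, C ∈ ℂ^{n×n} be Hermitian commuting matrices with B having all diagonal structure: fix indices r ≠ s and let β_r = B_rr, β_s = B_ss. Then |e_r^T(BC)e_s − β_r C_rs| ≤ (√2/2)·off(B)·‖C‖₂ and |e_r^T(CB)e_s − β_s C_rs| ≤ (√2/2)·off(B)·‖C‖₂, where off(B) = ‖B − diag(B)‖_F and ‖·‖₂ is the spectral norm. -/
open Matrix

noncomputable def frobNorm {ι κ : Type*} [Fintype ι] [Fintype κ] (A : Matrix ι κ ℂ) : ℝ :=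
  Real.sqrt (∑ i, ∑ j, ‖A i j‖ ^ 2)

noncomputable def offNorm {ι : Type*} [Fintype ι] [DecidableEq ι] (A : Matrix ι ι ℂ) : ℝ :=
  frobNorm (A - Matrix.diagonal (fun i => A i i))

noncomputable def specNorm {ι : Type*} [Fintype ι] [DecidableEq ι] (A : Matrix ι ι ℂ) : ℝ :=
  ‖Matrix.toEuclideanCLM (𝕜 := ℂ) A‖

/-! Write `B = D + M` with `D` the diagonal of `B`. Then `(BC)_{rs} - B_{rr} C_{rs} = (MC)_{rs}`,
and by Cauchy–Schwarz this is at most the ℓ²-norm of row `r` of `M` times `‖C‖₂`; symmetrically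
`(CB)_{rs} - B_{ss} C_{rs} = (CM)_{rs}` is controlled by column `s` of `M`. As `M` is Hermitian with
zero diagonal, row `r` and column `r` of `M` are disjoint sets of entries with equal norms, so each
carries at most half of `off(B)²`. -/

open WithLp

def offDiagPart {ι : Type*} [DecidableEq ι] (A : Matrix ι ι ℂ) : Matrix ι ι ℂ :=
  A - diagonal (fun i => A i i)

section

variable {ι : Type*}

lemma Matrix.IsHermitian.norm_apply_comm {A : Matrix ι ι ℂ} (hA : A.IsHermitian) (i j : ι) :
    ‖A i j‖ = ‖A j i‖ := by
  rw [← hA.apply i j, norm_star]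

variable [DecidableEq ι]

lemma offDiagPart_apply_self (A : Matrix ι ι ℂ) (i : ι) : offDiagPart A i i = 0 := by
  simp [offDiagPart]

lemma Matrix.IsHermitian.offDiagPart {A : Matrix ι ι ℂ} (hA : A.IsHermitian) :
    (offDiagPart A).IsHermitian :=
  hA.sub <| isHermitian_diagonal_of_self_adjoint _ <| funext fun i => hA.apply i i

variable [Fintype ι]

lemma mul_apply_sub_mul_eq_offDiagPart_mul (A C : Matrix ι ι ℂ) (r s : ι) :
    (A * C) r s - A r r * C r s = (offDiagPart A * C) r s := by
  simp [offDiagPart, sub_mul, diagonal_mul]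

lemma mul_apply_sub_mul_eq_mul_offDiagPart (A C : Matrix ι ι ℂ) (r s : ι) :
    (C * A) r s - A s s * C r s = (C * offDiagPart A) r s := by
  simp [offDiagPart, mul_sub, mul_diagonal, mul_comm]

lemma mul_mul_apply_eq_inner (A C D : Matrix ι ι ℂ) (r s : ι) :
    (A * C * D) r s =
      inner ℂ (toLp 2 (star (A r))) (toEuclideanCLM (𝕜 := ℂ) C (toLp 2 fun k => D k s)) := by
  rw [EuclideanSpace.inner_toLp_toLp, Matrix.mul_assoc, star_star, dotProduct_comm]
  rfl

lemma norm_mul_mul_apply_le (A C D : Matrix ι ι ℂ) (r s : ι) :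
    ‖(A * C * D) r s‖ ≤ √(∑ k, ‖A r k‖ ^ 2) * specNorm C * √(∑ k, ‖D k s‖ ^ 2) := by
  rw [mul_mul_apply_eq_inner]
  calc _ ≤ _ := norm_inner_le_norm _ _
    _ ≤ _ := mul_le_mul_of_nonneg_left ((toEuclideanCLM (𝕜 := ℂ) C).le_opNorm _) (norm_nonneg _)
    _ = _ := by simp [EuclideanSpace.norm_eq, specNorm, mul_assoc]

lemma norm_mul_apply_le_sqrt_sum_row_mul_specNorm (A C : Matrix ι ι ℂ) (r s : ι) :
    ‖(A * C) r s‖ ≤ √(∑ k, ‖A r k‖ ^ 2) * specNorm C := by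
  simpa [one_apply, apply_ite] using norm_mul_mul_apply_le A C 1 r s

lemma norm_mul_apply_le_specNorm_mul_sqrt_sum_col (C D : Matrix ι ι ℂ) (r s : ι) :
    ‖(C * D) r s‖ ≤ specNorm C * √(∑ k, ‖D k s‖ ^ 2) := by
  simpa [one_apply, apply_ite] using norm_mul_mul_apply_le 1 C D r s

lemma sum_row_add_sum_col_le_sum_sum {f : ι → ι → ℝ} (hf : ∀ i j, 0 ≤ f i j) {r : ι}
    (hr : f r r = 0) : ∑ k, f r k + ∑ k, f k r ≤ ∑ i, ∑ j, f i j := by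
  have hr_mem := Finset.mem_univ r
  calc ∑ k, f r k + ∑ k, f k r = ∑ k, f r k + ∑ i ∈ Finset.univ.erase r, f i r := by
        rw [← Finset.add_sum_erase _ (fun i => f i r) hr_mem, hr, zero_add]
    _ ≤ ∑ k, f r k + ∑ i ∈ Finset.univ.erase r, ∑ j, f i j := by
        gcongr with i
        exact Finset.single_le_sum (fun j _ => hf i j) hr_mem
    _ = ∑ i, ∑ j, f i j := Finset.add_sum_erase _ (fun i => ∑ j, f i j) hr_mem

lemma sqrt_sum_row_sq_le_frobNorm {A : Matrix ι ι ℂ} (hA : A.IsHermitian) {r : ι}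
    (hr : A r r = 0) : √(∑ k, ‖A r k‖ ^ 2) ≤ √2 / 2 * frobNorm A := by
  have h := sum_row_add_sum_col_le_sum_sum (f := fun i j => ‖A i j‖ ^ 2) (fun _ _ => by positivity)
    (r := r) (by simp [hr])
  simp only [hA.norm_apply_comm _ r, ← two_mul] at h
  rw [frobNorm, Real.sqrt_le_left (by positivity), mul_pow, div_pow,
    Real.sq_sqrt zero_le_two, Real.sq_sqrt (by positivity)]
  linarith

lemma sqrt_sum_col_sq_le_frobNorm {A : Matrix ι ι ℂ} (hA : A.IsHermitian) {s : ι}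
    (hs : A s s = 0) : √(∑ k, ‖A k s‖ ^ 2) ≤ √2 / 2 * frobNorm A := by
  simpa only [hA.norm_apply_comm _ s] using sqrt_sum_row_sq_le_frobNorm hA hs

end

theorem stmt_6_general {n : ℕ} (B C : Matrix (Fin n) (Fin n) ℂ)
    (hB : B.IsHermitian) (r s : Fin n) :
    ‖(B * C) r s - B r r * C r s‖ ≤ Real.sqrt 2 / 2 * offNorm B * specNorm C ∧
    ‖(C * B) r s - B s s * C r s‖ ≤ Real.sqrt 2 / 2 * offNorm B * specNorm C := by
  have hM := hB.offDiagPart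
  constructor
  · rw [mul_apply_sub_mul_eq_offDiagPart_mul]
    exact (norm_mul_apply_le_sqrt_sum_row_mul_specNorm _ C r s).trans <|
      mul_le_mul_of_nonneg_right (sqrt_sum_row_sq_le_frobNorm hM (offDiagPart_apply_self B r))
        (norm_nonneg _)
  · rw [mul_apply_sub_mul_eq_mul_offDiagPart, mul_comm (√2 / 2 * offNorm B)]
    exact (norm_mul_apply_le_specNorm_mul_sqrt_sum_col C _ r s).trans <|
      mul_le_mul_of_nonneg_left (sqrt_sum_col_sq_le_frobNorm hM (offDiagPart_apply_self B s))
        (norm_nonneg _)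

/-- For commuting Hermitian `B`, `C` and indices `r ≠ s`,
`|(BC)_{rs} - B_{rr} C_{rs}| ≤ (√2/2)·off(B)·‖C‖₂` and
`|(CB)_{rs} - B_{ss} C_{rs}| ≤ (√2/2)·off(B)·‖C‖₂`. -/
theorem stmt_6 {n : ℕ} (B C : Matrix (Fin n) (Fin n) ℂ)
    (hB : B.IsHermitian) (hC : C.IsHermitian) (hcomm : B * C = C * B)
    (r s : Fin n) (hrs : r ≠ s) :
    ‖(B * C) r s - B r r * C r s‖ ≤ Real.sqrt 2 / 2 * offNorm B * specNorm C ∧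
    ‖(C * B) r s - B s s * C r s‖ ≤ Real.sqrt 2 / 2 * offNorm B * specNorm C :=
  stmt_6_general B C hB r s
end

section
/- Let (B_k)_{k≥0} and (C_k)_{k≥0} be sequences of commuting n×n Hermitian matrices with ‖C_k‖₂ = ‖C_0‖₂ bounded, such that B_k converges to a diagonal matrix diag(β_1,…,β_n). Then for every pair r ≠ s, the sequence (C_k)_{rs}·(β_r − β_s) converges to 0. In particular, if all β_r are distinct, then off(C_k) → 0. -/
/-!
Since `B k` commutes with `C k`, the commutator `[diag β, C k]`, whose `(r, s)` entry is
`(β r - β s) (C k)_{rs}`, equals `[diag β - B k, C k]`. The entries of `diag β - B k` tend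
to `0` while those of `C k` stay bounded by `‖C 0‖₂`, so every entry of this commutator
tends to `0`. When the `β r` are distinct one can divide by `β r - β s`.
-/

open Matrix Filter Topology

lemma norm_apply_le_specNorm {ι : Type*} [Fintype ι] [DecidableEq ι] (A : Matrix ι ι ℂ)
    (i j : ι) : ‖A i j‖ ≤ specNorm A := by
  have happly : (toEuclideanCLM (𝕜 := ℂ) A (EuclideanSpace.single j 1)).ofLp i = A i j := by
    simp [ofLp_toEuclideanCLM, mulVec, dotProduct]
  calc ‖A i j‖ ≤ ‖toEuclideanCLM (𝕜 := ℂ) A (EuclideanSpace.single j 1)‖ :=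
        happly ▸ PiLp.norm_apply_le _ i
    _ ≤ specNorm A := by
        simpa [specNorm] using
          (toEuclideanCLM (𝕜 := ℂ) A).le_opNorm (EuclideanSpace.single j 1)

namespace Matrix

variable {ι : Type*} [Fintype ι]

lemma apply_mul_sub_eq_commutator_apply [DecidableEq ι] {R : Type*} [CommRing R]
    {B C : Matrix ι ι R} (hBC : B * C = C * B) (d : ι → R) (r s : ι) :
    C r s * (d r - d s) = ((diagonal d - B) * C - C * (diagonal d - B)) r s := by
  have hcomm : (diagonal d - B) * C - C * (diagonal d - B) = diagonal d * C - C * diagonal d := by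
    rw [sub_mul, mul_sub, hBC]; abel
  rw [hcomm, sub_apply, diagonal_mul, mul_diagonal]
  ring

variable {α R : Type*} [NonUnitalSeminormedRing R] {l : Filter α} {E C : α → Matrix ι ι R}

lemma tendsto_zero_mul_bounded_apply (hE : ∀ i j, Tendsto (fun k => E k i j) l (𝓝 0))
    (hC : ∀ i j, IsBoundedUnder (· ≤ ·) l (fun k => ‖C k i j‖)) (r s : ι) :
    Tendsto (fun k => (E k * C k) r s) l (𝓝 0) := by
  simp only [mul_apply]
  simpa using tendsto_finsetSum Finset.univ fun t _ => (hE r t).zero_mul_isBoundedUnder_le (hC t s)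

lemma tendsto_bounded_mul_zero_apply (hE : ∀ i j, Tendsto (fun k => E k i j) l (𝓝 0))
    (hC : ∀ i j, IsBoundedUnder (· ≤ ·) l (fun k => ‖C k i j‖)) (r s : ι) :
    Tendsto (fun k => (C k * E k) r s) l (𝓝 0) := by
  simp only [mul_apply]
  simpa using tendsto_finsetSum Finset.univ fun t _ =>
    isBoundedUnder_le_mul_tendsto_zero (hC r t) (hE t s)

lemma tendsto_commutator_apply_zero (hE : ∀ i j, Tendsto (fun k => E k i j) l (𝓝 0))
    (hC : ∀ i j, IsBoundedUnder (· ≤ ·) l (fun k => ‖C k i j‖)) (r s : ι) :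
    Tendsto (fun k => (E k * C k - C k * E k) r s) l (𝓝 0) := by
  simpa using
    (tendsto_zero_mul_bounded_apply hE hC r s).sub (tendsto_bounded_mul_zero_apply hE hC r s)

end Matrix

lemma tendsto_offNorm_zero {α ι : Type*} [Fintype ι] [DecidableEq ι] {l : Filter α}
    {C : α → Matrix ι ι ℂ} (hC : ∀ r s, r ≠ s → Tendsto (fun k => C k r s) l (𝓝 0)) :
    Tendsto (fun k => offNorm (C k)) l (𝓝 0) := by
  have hoff :
      ∀ r s, Tendsto (fun k => ‖(C k - diagonal fun i => C k i i) r s‖ ^ 2) l (𝓝 0) := by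
    intro r s
    rcases eq_or_ne r s with rfl | hrs
    · simpa using tendsto_const_nhds
    · simpa [diagonal_apply_ne _ hrs] using ((hC r s hrs).norm).pow 2
  have hsum :
      Tendsto (fun k => ∑ r, ∑ s, ‖(C k - diagonal fun i => C k i i) r s‖ ^ 2) l (𝓝 0) := by
    simpa using tendsto_finsetSum Finset.univ fun r _ =>
      tendsto_finsetSum Finset.univ fun s _ => hoff r s
  have hsqrt := (Real.continuous_sqrt.tendsto 0).comp hsum
  rwa [Real.sqrt_zero] at hsqrt

theorem stmt_7_general {n : ℕ} (B C : ℕ → Matrix (Fin n) (Fin n) ℂ) (β : Fin n → ℝ)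
    (hcomm : ∀ k, B k * C k = C k * B k)
    (hbound : ∀ k, specNorm (C k) = specNorm (C 0))
    (hlim : ∀ i j, Filter.Tendsto (fun k => B k i j) Filter.atTop
      (nhds (Matrix.diagonal (fun r => (β r : ℂ)) i j))) :
    (∀ r s, r ≠ s →
      Filter.Tendsto (fun k => C k r s * ((β r : ℂ) - (β s : ℂ))) Filter.atTop (nhds 0)) ∧
    (Function.Injective β →
      Filter.Tendsto (fun k => offNorm (C k)) Filter.atTop (nhds 0)) := by
  set D : Matrix (Fin n) (Fin n) ℂ := diagonal fun r => (β r : ℂ)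
  have hE : ∀ i j, Tendsto (fun k => (D - B k) i j) atTop (𝓝 0) := fun i j => by
    simpa using (hlim i j).const_sub (D i j)
  have hCbdd : ∀ i j, IsBoundedUnder (· ≤ ·) atTop (fun k => ‖C k i j‖) := fun i j =>
    isBoundedUnder_of
      ⟨specNorm (C 0), fun k => (norm_apply_le_specNorm _ i j).trans_eq (hbound k)⟩
  have hentry : ∀ r s, Tendsto (fun k => C k r s * ((β r : ℂ) - β s)) atTop (𝓝 0) := by
    intro r s
    refine (tendsto_commutator_apply_zero hE hCbdd r s).congr fun k => ?_
    exact (apply_mul_sub_eq_commutator_apply (hcomm k) _ r s).symm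
  refine ⟨fun r s _ => hentry r s, fun hβ => tendsto_offNorm_zero fun r s hrs => ?_⟩
  have hne : (β r : ℂ) - β s ≠ 0 := sub_ne_zero.2 (by exact_mod_cast hβ.ne hrs)
  simpa [hne] using (hentry r s).mul_const ((β r : ℂ) - β s)⁻¹

/-- For sequences of commuting Hermitian matrices `B k`, `C k` with `‖C k‖₂ = ‖C 0‖₂`
and `B k` converging (entrywise) to the diagonal matrix `diagonal β`, every off-diagonal
entry satisfies `(C k)_{rs}(β r - β s) → 0`; if all `β r` are distinct, `off(C k) → 0`. -/
theorem stmt_7 {n : ℕ} (B C : ℕ → Matrix (Fin n) (Fin n) ℂ) (β : Fin n → ℝ)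
    (hBh : ∀ k, (B k).IsHermitian) (hCh : ∀ k, (C k).IsHermitian)
    (hcomm : ∀ k, B k * C k = C k * B k)
    (hbound : ∀ k, specNorm (C k) = specNorm (C 0))
    (hlim : ∀ i j, Filter.Tendsto (fun k => B k i j) Filter.atTop
      (nhds (Matrix.diagonal (fun r => (β r : ℂ)) i j))) :
    (∀ r s, r ≠ s →
      Filter.Tendsto (fun k => C k r s * ((β r : ℂ) - (β s : ℂ))) Filter.atTop (nhds 0)) ∧
    (Function.Injective β →
      Filter.Tendsto (fun k => offNorm (C k)) Filter.atTop (nhds 0)) :=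
  stmt_7_general B C β hcomm hbound hlim
end
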